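/- arXiv:2006.14951 — 2 statements merged into one kernel-verified Lean document; each statement's English description precedes it below -/
import Mathlib

section
/- Let u : ℝⁿ → ℝᵏ be uniformly continuous with |u(x)| ≤ 1 for all x, and suppose ∫_{ℝⁿ} |u(x)|²(1 - |u(x)|²) dx < ∞. Then the set S = {x ∈ ℝⁿ : 1/4 ≤ |u(x)| ≤ 3/4} is bounded. -/
/-!
Uniform continuity of `‖u‖` gives `δ > 0` such that the `δ`-thickening of `S` lies in
`{1/8 ≤ ‖u‖ ≤ 7/8}`, where the integrand is at least `15/4096`; so the thickening has finite
measure. An unbounded set would contain infinitely many points at mutual distance `≥ 2δ`, whose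
disjoint `δ`-balls inside the thickening have infinite total measure.
-/

open MeasureTheory Metric Set Function

theorem exists_seq_pairwise_le_dist_of_not_isBounded {X : Type*} [PseudoMetricSpace X] {S : Set X}
    (hS : ¬ Bornology.IsBounded S) (r : ℝ) :
    ∃ f : ℕ → X, (∀ m, f m ∈ S) ∧ Pairwise fun m n => r ≤ dist (f m) (f n) := by
  have : Std.Symm fun x y : X => r ≤ dist x y := ⟨fun x y h => by rwa [dist_comm]⟩
  refine exists_seq_of_forall_finset_exists' (· ∈ S) (fun x y => r ≤ dist x y) fun s _ => ?_
  have hSs : ¬ S ⊆ cthickening r (s : Set X) :=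
    fun h => hS (s.finite_toSet.isBounded.cthickening.subset h)
  obtain ⟨y, hyS, hys⟩ := not_subset.mp hSs
  refine ⟨y, hyS, fun x hx => ?_⟩
  by_contra! hlt
  exact hys (mem_cthickening_of_dist_le y x r s hx (by rw [dist_comm]; exact hlt.le))

theorem measure_thickening_eq_top_of_not_isBounded {E : Type*} [NormedAddCommGroup E]
    [MeasurableSpace E] [BorelSpace E] (μ : Measure E) [μ.IsAddHaarMeasure] {S : Set E}
    (hS : ¬ Bornology.IsBounded S) {δ : ℝ} (hδ : 0 < δ) :
    μ (thickening δ S) = ⊤ := by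
  obtain ⟨f, hfS, hsep⟩ := exists_seq_pairwise_le_dist_of_not_isBounded hS (δ + δ)
  have hdisj : Pairwise (Disjoint on fun m => ball (f m) δ) :=
    fun m n hmn => ball_disjoint_ball (hsep hmn)
  have hunion : (⋃ m, ball (f m) δ) ⊆ thickening δ S :=
    iUnion_subset fun m => ball_subset_thickening (hfS m) δ
  have hballs : μ (⋃ m, ball (f m) δ) = ⊤ := by
    rw [measure_iUnion hdisj fun _ => measurableSet_ball]
    simp_rw [Measure.addHaar_ball_center μ (f _) δ]
    exact ENNReal.tsum_const_eq_top_of_ne_zero (measure_ball_pos μ 0 hδ).ne'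
  exact top_le_iff.mp (hballs ▸ measure_mono hunion)

theorem UniformContinuous.exists_thickening_preimage_Icc_subset {X : Type*}
    [PseudoMetricSpace X] {f : X → ℝ} (hf : UniformContinuous f) (a b : ℝ) {ε : ℝ}
    (hε : 0 < ε) :
    ∃ δ > 0, thickening δ (f ⁻¹' Icc a b) ⊆ f ⁻¹' Icc (a - ε) (b + ε) := by
  obtain ⟨δ, hδ, hfδ⟩ := Metric.uniformContinuous_iff.mp hf ε hε
  refine ⟨δ, hδ, fun y hy => ?_⟩
  obtain ⟨x, ⟨hax, hxb⟩, hyx⟩ := mem_thickening_iff.mp hy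
  have hclose := abs_sub_lt_iff.mp (Real.dist_eq _ _ ▸ hfδ hyx)
  constructor <;> linarith [hclose.1, hclose.2]

theorem le_sq_mul_one_sub_sq_of_mem_Icc {t : ℝ} (ht : t ∈ Icc (1 / 8 : ℝ) (7 / 8)) :
    15 / 4096 ≤ t ^ 2 * (1 - t ^ 2) := by
  obtain ⟨h₁, h₂⟩ := ht
  have hsq₁ : (1 : ℝ) / 64 ≤ t ^ 2 := by nlinarith
  have hsq₂ : (15 : ℝ) / 64 ≤ 1 - t ^ 2 := by nlinarith
  calc (15 : ℝ) / 4096 = 1 / 64 * (15 / 64) := by norm_num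
    _ ≤ t ^ 2 * (1 - t ^ 2) := mul_le_mul hsq₁ hsq₂ (by norm_num) (by positivity)

theorem stmt0_general (n k : ℕ)
    (u : EuclideanSpace ℝ (Fin n) → EuclideanSpace ℝ (Fin k))
    (hu : UniformContinuous u)
    (hfin : Integrable (fun x => ‖u x‖ ^ 2 * (1 - ‖u x‖ ^ 2))) :
    ∃ R₀ > (0 : ℝ),
      {x : EuclideanSpace ℝ (Fin n) | 1 / 4 ≤ ‖u x‖ ∧ ‖u x‖ ≤ 3 / 4}
        ⊆ Metric.ball 0 R₀ := by
  set S := {x : EuclideanSpace ℝ (Fin n) | 1 / 4 ≤ ‖u x‖ ∧ ‖u x‖ ≤ 3 / 4}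
  obtain ⟨δ, hδ, hthick⟩ := (uniformContinuous_norm.comp hu).exists_thickening_preimage_Icc_subset
    (1 / 4) (3 / 4) (ε := 1 / 8) (by norm_num)
  have hfinite : volume (thickening δ S) ≠ ⊤ := by
    refine ne_top_of_le_ne_top (hfin.measure_ge_lt_top (ε := 15 / 4096) (by norm_num)).ne ?_
    refine measure_mono fun y hy => le_sq_mul_one_sub_sq_of_mem_Icc ?_
    convert hthick hy using 2; norm_num
  have hbdd : Bornology.IsBounded S := by
    by_contra hS
    exact hfinite (measure_thickening_eq_top_of_not_isBounded volume hS hδ)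
  exact hbdd.subset_ball_lt 0 0

theorem stmt0 (n k : ℕ) (hn : 2 ≤ n) (hk : 1 ≤ k)
    (u : EuclideanSpace ℝ (Fin n) → EuclideanSpace ℝ (Fin k))
    (hu : UniformContinuous u)
    (hb : ∀ x, ‖u x‖ ≤ 1)
    (hfin : Integrable (fun x => ‖u x‖ ^ 2 * (1 - ‖u x‖ ^ 2))) :
    ∃ R₀ > (0 : ℝ),
      {x : EuclideanSpace ℝ (Fin n) | 1 / 4 ≤ ‖u x‖ ∧ ‖u x‖ ≤ 3 / 4}
        ⊆ Metric.ball 0 R₀ :=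
  stmt0_general n k u hu hfin
end

section
/- Let u : ℝⁿ → ℝᵏ be uniformly continuous with |u| ≤ 1 on ℝⁿ and 1 - |u|² ∈ L¹(ℝⁿ). Then |u(x)| → 1 as |x| → ∞. -/
open MeasureTheory Filter Metric Topology

/-! If `‖f x‖ ≥ ε`, uniform continuity keeps `‖f‖ ≥ ε / 2` on the ball of a fixed radius `δ`
around `x`, so by translation invariance of Haar measure the finite measure `‖f‖ ∂μ` gives that
ball a mass bounded below independently of `x`. A finite measure on a proper space is tight, so
this mass tends to `0` as `x → ∞`; hence `f → 0` at infinity. Apply this to `f = 1 - ‖u‖²`,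
which is uniformly continuous because `u` takes values in the compact unit ball. -/

theorem tendsto_ball_cocompact_smallSets {X : Type*} [PseudoMetricSpace X] [ProperSpace X]
    (r : ℝ) : Tendsto (fun x => ball x r) (cocompact X) (cocompact X).smallSets := by
  rw [tendsto_smallSets_iff]
  intro t ht
  obtain ⟨K, hK, hKt⟩ := mem_cocompact.mp ht
  filter_upwards [(hK.cthickening (r := r)).compl_mem_cocompact] with x hx y hy
  refine hKt fun hyK => hx ?_
  exact thickening_subset_cthickening r K <|
    mem_thickening_iff.mpr ⟨y, hyK, by rwa [dist_comm, ← mem_ball]⟩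

theorem tendsto_measure_ball_cocompact {X : Type*} [PseudoMetricSpace X] [ProperSpace X]
    [MeasurableSpace X] [BorelSpace X] (μ : Measure X) [IsFiniteMeasure μ] (r : ℝ) :
    Tendsto (fun x => μ (ball x r)) (cocompact X) (𝓝 0) := by
  have htight : Tendsto μ (cocompact X).smallSets (𝓝 0) := by
    simpa [IsTightMeasureSet] using (isTightMeasureSet_singleton (μ := μ))
  exact htight.comp (tendsto_ball_cocompact_smallSets r)

theorem UniformContinuous.tendsto_zero_cocompact_of_integrable
    {E F : Type*} [NormedAddCommGroup E] [NormedSpace ℝ E] [FiniteDimensional ℝ E]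
    [MeasurableSpace E] [BorelSpace E] [NormedAddCommGroup F]
    {μ : Measure E} [μ.IsAddHaarMeasure] {f : E → F}
    (hf : UniformContinuous f) (hfi : Integrable f μ) :
    Tendsto f (cocompact E) (𝓝 0) := by
  set ν := μ.withDensity fun y => ‖f y‖ₑ
  have : IsFiniteMeasure ν := isFiniteMeasure_withDensity hfi.hasFiniteIntegral.ne
  rw [Metric.tendsto_nhds]
  intro ε hε
  obtain ⟨δ, hδ, hfδ⟩ := Metric.uniformContinuous_iff.mp hf (ε / 2) (half_pos hε)
  have hc : 0 < ENNReal.ofReal (ε / 2) * μ (ball 0 δ) :=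
    ENNReal.mul_pos (by simpa using hε) (measure_ball_pos μ 0 hδ).ne'
  have hlow : ∀ x, ε ≤ ‖f x‖ → ENNReal.ofReal (ε / 2) * μ (ball 0 δ) ≤ ν (ball x δ) := by
    intro x hx
    rw [withDensity_apply _ measurableSet_ball, ← μ.addHaar_ball_center x, ← setLIntegral_const]
    refine setLIntegral_mono' measurableSet_ball fun y hy => ?_
    rw [← ofReal_norm]
    refine ENNReal.ofReal_le_ofReal ?_
    have hxy : ‖f x - f y‖ < ε / 2 := by simpa [dist_eq_norm] using hfδ (mem_ball'.mp hy)
    linarith [norm_sub_norm_le (f x) (f y)]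
  filter_upwards [(tendsto_measure_ball_cocompact ν δ).eventually (gt_mem_nhds hc)] with x hx
  rw [dist_zero_right]
  by_contra! hfx
  exact (hlow x hfx).not_gt hx

theorem UniformContinuous.comp_continuousOn_of_isCompact {α β γ : Type*} [UniformSpace α]
    [UniformSpace β] [UniformSpace γ] {f : α → β} {g : β → γ} {K : Set β} (hK : IsCompact K)
    (hg : ContinuousOn g K) (hf : UniformContinuous f) (hfK : ∀ x, f x ∈ K) :
    UniformContinuous (g ∘ f) :=
  uniformContinuousOn_univ.mp <| (hK.uniformContinuousOn_of_continuous hg).comp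
    (uniformContinuousOn_univ.mpr hf) fun x _ => hfK x

theorem stmt2_general (n k : ℕ)
    (u : EuclideanSpace ℝ (Fin n) → EuclideanSpace ℝ (Fin k))
    (hu : UniformContinuous u)
    (hb : ∀ x, ‖u x‖ ≤ 1)
    (hL1 : Integrable (fun x => 1 - ‖u x‖ ^ 2)) :
    Tendsto (fun x => ‖u x‖) (cocompact (EuclideanSpace ℝ (Fin n))) (nhds 1) := by
  have hsq : UniformContinuous fun x => ‖u x‖ ^ 2 :=
    UniformContinuous.comp_continuousOn_of_isCompact (isCompact_closedBall 0 1)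
      (continuous_norm.pow 2).continuousOn hu fun x => mem_closedBall_zero_iff.mpr (hb x)
  have hdefect : Tendsto (fun x => 1 - ‖u x‖ ^ 2) (cocompact _) (𝓝 0) :=
    (uniformContinuous_const.sub hsq).tendsto_zero_cocompact_of_integrable hL1
  have hsqrt : Tendsto (fun t : ℝ => √(1 - t)) (𝓝 0) (𝓝 1) := by
    simpa using (((continuous_const (y := (1 : ℝ))).sub continuous_id).sqrt.tendsto (0 : ℝ))
  refine (hsqrt.comp hdefect).congr fun x => ?_
  simp [Real.sqrt_sq (norm_nonneg _)]

theorem stmt2 (n k : ℕ) (hn : 1 ≤ n) (hk : 1 ≤ k)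
    (u : EuclideanSpace ℝ (Fin n) → EuclideanSpace ℝ (Fin k))
    (hu : UniformContinuous u)
    (hb : ∀ x, ‖u x‖ ≤ 1)
    (hL1 : Integrable (fun x => 1 - ‖u x‖ ^ 2)) :
    Tendsto (fun x => ‖u x‖) (cocompact (EuclideanSpace ℝ (Fin n))) (nhds 1) :=
  stmt2_general n k u hu hb hL1
end
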